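/- For the intermediate arrangement A = A^k_ℓ(r) with 1 ≤ k ≤ ℓ−1, and a hyperplane H = H_{ij}(ζ) with 1 ≤ i ≤ k < j ≤ ℓ, the restriction A^H is linearly isomorphic to A^k_{ℓ−1}(r); for H = H_i a coordinate hyperplane, A^{H} is linearly isomorphic to A^{ℓ−1}_{ℓ−1}(r); for H = H_{ij}(ζ) with 1 ≤ i < j ≤ k, A^H ≅ A^{k−1}_{ℓ−1}(r); and for H = H_{ij}(ζ) with k < i < j ≤ ℓ, A^H ≅ A^{k+1}_{ℓ−1}(r). -/

import Mathlib

open Submodule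

/-- The intersection lattice of the arrangement `A` with ambient space `Z`:
all subspaces of the form `Z ⊓ sInf S` for `S ⊆ A` (the empty intersection gives `Z`). -/
def ArrLatIn {V : Type*} [AddCommGroup V] [Module ℂ V] (Z : Submodule ℂ V)
    (A : Set (Submodule ℂ V)) : Set (Submodule ℂ V) :=
  {X | ∃ S ⊆ A, X = Z ⊓ sInf S}

/-- `X` is a modular element of the lattice `ℒ` (ordered by reverse inclusion):
`X ∈ ℒ` and `X + Y ∈ ℒ` for every `Y ∈ ℒ`. -/
def ModularIn {V : Type*} [AddCommGroup V] [Module ℂ V]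
    (ℒ : Set (Submodule ℂ V)) (X : Submodule ℂ V) : Prop :=
  X ∈ ℒ ∧ ∀ Y ∈ ℒ, X ⊔ Y ∈ ℒ

/-- The restriction of the arrangement `A` to the subspace `Z`:
the hyperplanes `Z ∩ H` for `H ∈ A` with `Z ⊄ H`. -/
def Restrict {V : Type*} [AddCommGroup V] [Module ℂ V]
    (A : Set (Submodule ℂ V)) (Z : Submodule ℂ V) : Set (Submodule ℂ V) :=
  {W | ∃ H ∈ A, ¬ Z ≤ H ∧ W = Z ⊓ H}

/-- A (lattice of subspaces ordered by reverse inclusion) is supersolvable if it admits a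
maximal chain `C 0 > C 1 > ... > C n` (top to bottom) consisting of modular elements. -/
def LatSupersolvable {V : Type*} [AddCommGroup V] [Module ℂ V]
    (ℒ : Set (Submodule ℂ V)) : Prop :=
  ∃ n, ∃ C : Fin (n + 1) → Submodule ℂ V,
    (∀ i, ModularIn ℒ (C i)) ∧
    (∀ W ∈ ℒ, W ≤ C 0) ∧
    (∀ W ∈ ℒ, C (Fin.last n) ≤ W) ∧
    (∀ i : Fin n, C i.succ < C i.castSucc) ∧
    (∀ i : Fin n, ∀ W ∈ ℒ, ¬(C i.succ < W ∧ W < C i.castSucc))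

/-- The product of two arrangements. -/
def ProdArr {V₁ V₂ : Type*} [AddCommGroup V₁] [Module ℂ V₁] [AddCommGroup V₂] [Module ℂ V₂]
    (A₁ : Set (Submodule ℂ V₁)) (A₂ : Set (Submodule ℂ V₂)) : Set (Submodule ℂ (V₁ × V₂)) :=
  ((fun H => H.prod (⊤ : Submodule ℂ V₂)) '' A₁) ∪
    ((fun H => (⊤ : Submodule ℂ V₁).prod H) '' A₂)

/-- The coordinate hyperplane `ker x_i` in `ℂ^ℓ`. -/
noncomputable def coordH (ℓ : ℕ) (i : Fin ℓ) : Submodule ℂ (Fin ℓ → ℂ) :=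
  LinearMap.ker (LinearMap.proj i : (Fin ℓ → ℂ) →ₗ[ℂ] ℂ)

/-- The hyperplane `ker (x_i - ζ x_j)` in `ℂ^ℓ`. -/
noncomputable def diffH (ℓ : ℕ) (i j : Fin ℓ) (ζ : ℂ) : Submodule ℂ (Fin ℓ → ℂ) :=
  LinearMap.ker ((LinearMap.proj i : (Fin ℓ → ℂ) →ₗ[ℂ] ℂ) - ζ • (LinearMap.proj j))

/-- The intermediate arrangement `A^k_ℓ(r)`: the first `k` coordinate hyperplanes together with
all hyperplanes `ker (x_i - ζ x_j)` for `i < j` and `ζ` an `r`-th root of unity. -/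
def interArr (r ℓ k : ℕ) : Set (Submodule ℂ (Fin ℓ → ℂ)) :=
  {H | ∃ i : Fin ℓ, (i : ℕ) < k ∧ H = coordH ℓ i} ∪
    {H | ∃ i j : Fin ℓ, i < j ∧ ∃ ζ : ℂ, ζ ^ r = 1 ∧ H = diffH ℓ i j ζ}

/-- The Boolean subarrangement `B^k_ℓ` of the first `k` coordinate hyperplanes of `ℂ^ℓ`. -/
def boolArr (ℓ k : ℕ) : Set (Submodule ℂ (Fin ℓ → ℂ)) :=
  {H | ∃ i : Fin ℓ, (i : ℕ) < k ∧ H = coordH ℓ i}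

/-- The degree-one polynomial corresponding to a linear form on `ℂ^n`. -/
noncomputable def linPoly {n : ℕ} (f : (Fin n → ℂ) →ₗ[ℂ] ℂ) : MvPolynomial (Fin n) ℂ :=
  ∑ i, MvPolynomial.C (f (Pi.single i 1)) * MvPolynomial.X i

/-- The module of derivations `D(Q) = {θ | θ(Q) ∈ Q·S}` is free with a homogeneous basis
`θ 0, ..., θ (n-1)` of polynomial degrees `e 0, ..., e (n-1)`. -/
def IsFreeWithExponents (n : ℕ) (Q : MvPolynomial (Fin n) ℂ) (e : Fin n → ℕ) : Prop :=
  ∃ θ : Fin n → Derivation ℂ (MvPolynomial (Fin n) ℂ) (MvPolynomial (Fin n) ℂ),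
    (∀ i, θ i Q ∈ Ideal.span {Q}) ∧
    (∀ i j, ((θ i) (MvPolynomial.X j)).IsHomogeneous (e i)) ∧
    (∀ c : Fin n → MvPolynomial (Fin n) ℂ, (∑ i, c i • θ i) = 0 → ∀ i, c i = 0) ∧
    (∀ η : Derivation ℂ (MvPolynomial (Fin n) ℂ) (MvPolynomial (Fin n) ℂ),
      η Q ∈ Ideal.span {Q} →
      ∃ c : Fin n → MvPolynomial (Fin n) ℂ, η = ∑ i, c i • θ i)

/-- An arrangement is irreducible if it is not a product of two nonempty arrangements, i.e.
there is no nontrivial direct sum decomposition of the ambient space such that every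
hyperplane contains one of the two summands. -/
def IsIrreducibleArr {V : Type*} [AddCommGroup V] [Module ℂ V]
    (A : Set (Submodule ℂ V)) : Prop :=
  ¬ ∃ V₁ V₂ : Submodule ℂ V, V₁ ≠ ⊥ ∧ V₂ ≠ ⊥ ∧ V₁ ⊓ V₂ = ⊥ ∧ V₁ ⊔ V₂ = ⊤ ∧
      ∀ H ∈ A, V₁ ≤ H ∨ V₂ ≤ H

/-- The restriction of `A` to the hyperplane `H` is linearly isomorphic to the intermediate
arrangement `A^{k'}_{ℓ'}(r)`. -/
def RestrEquiv (r ℓ : ℕ) (A : Set (Submodule ℂ (Fin ℓ → ℂ))) (H : Submodule ℂ (Fin ℓ → ℂ))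
    (ℓ' k' : ℕ) : Prop :=
  ∃ φ : (Fin ℓ' → ℂ) →ₗ[ℂ] (Fin ℓ → ℂ), Function.Injective φ ∧ LinearMap.range φ = H ∧
    Restrict A H = (fun K => Submodule.map φ K) '' interArr r ℓ' k'

/-!
Parametrize `H` by `ℂ^{ℓ-1}`: for `H_i` put `0` in slot `i`, for `H_{ij}(ζ)` put `ζ x_j` in slot
`i`. The hyperplanes of `A` not containing `H` pull back to an arrangement `A^T(r)`: all
`ker (x_a - ξ x_b)` for `a ≠ b`, plus the coordinate hyperplanes `ker x_a` for `a ∈ T`.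
For `H_i` every coordinate occurs (`ker (x_i - x_b)` becomes `ker x_b`). For `H_{ij}(ζ)`, `T` is
made of the surviving coordinates of `A` and of `j`, which comes from `ker (x_i - ζ ω x_j)` with
`ω ≠ 1` an `r`-th root of unity. As `A^T(r)` only depends on `#T` up to a permutation of
coordinates, it remains to count `#T` according to the position of `i, j` relative to `k`.
-/

open Finset

section Hyperplanes

variable {n : ℕ}

@[simp]
lemma mem_coordH {a : Fin n} {x : Fin n → ℂ} : x ∈ coordH n a ↔ x a = 0 := by
  simp [coordH]

@[simp]
lemma mem_diffH {a b : Fin n} {ζ : ℂ} {x : Fin n → ℂ} : x ∈ diffH n a b ζ ↔ x a = ζ * x b := by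
  simp [diffH, sub_eq_zero]

lemma coordH_ne_top (a : Fin n) : coordH n a ≠ ⊤ := by
  intro h
  have : (Pi.single a 1 : Fin n → ℂ) ∈ coordH n a := h ▸ mem_top
  simp at this

lemma diffH_ne_top {a b : Fin n} (hab : a ≠ b) (ζ : ℂ) : diffH n a b ζ ≠ ⊤ := by
  intro h
  have : (Pi.single a 1 : Fin n → ℂ) ∈ diffH n a b ζ := h ▸ mem_top
  simp [Pi.single_eq_of_ne' hab] at this

lemma diffH_self_one (a : Fin n) : diffH n a a 1 = ⊤ := by
  ext x; simp

lemma diffH_self_of_ne_one (a : Fin n) {ζ : ℂ} (hζ : ζ ≠ 1) : diffH n a a ζ = coordH n a := by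
  ext x
  rw [mem_diffH, mem_coordH, ← sub_eq_zero, ← one_sub_mul, mul_eq_zero,
    or_iff_right (sub_ne_zero.2 hζ.symm), eq_comm]

lemma diffH_comm (a b : Fin n) {ζ : ℂ} (hζ : ζ ≠ 0) : diffH n a b ζ = diffH n b a ζ⁻¹ := by
  ext x
  rw [mem_diffH, mem_diffH, eq_inv_mul_iff_mul_eq₀ hζ, eq_comm]

end Hyperplanes

/-- The arrangement `A^S(r)` of the header, so that `A^k_ℓ(r) = A^{a | a < k}(r)`. -/
def interArrOn {n : ℕ} (r : ℕ) (S : Finset (Fin n)) : Set (Submodule ℂ (Fin n → ℂ)) :=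
  {H | ∃ a ∈ S, H = coordH n a} ∪
    {H | ∃ a b, a ≠ b ∧ ∃ ζ : ℂ, ζ ^ r = 1 ∧ H = diffH n a b ζ}

section InterArrOn

variable {n r : ℕ} {S : Finset (Fin n)}

lemma coordH_mem_interArrOn {a : Fin n} (ha : a ∈ S) : coordH n a ∈ interArrOn r S :=
  Or.inl ⟨a, ha, rfl⟩

lemma diffH_mem_interArrOn {a b : Fin n} (hab : a ≠ b) {ζ : ℂ} (hζ : ζ ^ r = 1) :
    diffH n a b ζ ∈ interArrOn r S :=
  Or.inr ⟨a, b, hab, ζ, hζ, rfl⟩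

lemma diffH_mem_interArrOn_of_ne_top {a b : Fin n} (hS : a = b → a ∈ S) {ζ : ℂ}
    (hζ : ζ ^ r = 1) (hne : diffH n a b ζ ≠ ⊤) : diffH n a b ζ ∈ interArrOn r S := by
  obtain rfl | hab := eq_or_ne a b
  · have hζ1 : ζ ≠ 1 := by rintro rfl; exact hne (diffH_self_one a)
    rw [diffH_self_of_ne_one a hζ1]
    exact coordH_mem_interArrOn (hS rfl)
  · exact diffH_mem_interArrOn hab hζ

lemma interArr_eq_interArrOn (hr : r ≠ 0) (k : ℕ) :
    interArr r n k = interArrOn r {a | (a : ℕ) < k} := by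
  ext H
  constructor
  · rintro (⟨a, ha, rfl⟩ | ⟨a, b, hab, ζ, hζ, rfl⟩)
    · exact coordH_mem_interArrOn (by simpa using ha)
    · exact diffH_mem_interArrOn hab.ne hζ
  · rintro (⟨a, ha, rfl⟩ | ⟨a, b, hab, ζ, hζ, rfl⟩)
    · exact Or.inl ⟨a, by simpa using ha, rfl⟩
    obtain hab | hba := hab.lt_or_gt
    · exact Or.inr ⟨a, b, hab, ζ, hζ, rfl⟩
    · have hζ0 : ζ ≠ 0 := (IsUnit.of_pow_eq_one hζ hr).ne_zero
      exact Or.inr ⟨b, a, hba, ζ⁻¹, by rw [inv_pow, hζ, inv_one], diffH_comm a b hζ0⟩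

lemma image_comap_funCongrLeft_interArrOn (σ : Equiv.Perm (Fin n)) (S : Finset (Fin n)) :
    comap (LinearEquiv.funCongrLeft ℂ ℂ σ).toLinearMap '' interArrOn r S =
      interArrOn r (S.map σ.toEmbedding) := by
  have hcoord (a : Fin n) :
      comap (LinearEquiv.funCongrLeft ℂ ℂ σ).toLinearMap (coordH n a) = coordH n (σ a) := by
    ext y; simp [LinearMap.funLeft]
  have hdiff (a b : Fin n) (ζ : ℂ) : comap (LinearEquiv.funCongrLeft ℂ ℂ σ).toLinearMap
      (diffH n a b ζ) = diffH n (σ a) (σ b) ζ := by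
    ext y; simp [LinearMap.funLeft]
  ext H
  constructor
  · rintro ⟨_, ⟨a, ha, rfl⟩ | ⟨a, b, hab, ζ, hζ, rfl⟩, rfl⟩
    · rw [hcoord]
      exact coordH_mem_interArrOn (mem_map_of_mem _ ha)
    · rw [hdiff]
      exact diffH_mem_interArrOn (σ.injective.ne hab) hζ
  · rintro (⟨_, ha, rfl⟩ | ⟨a, b, hab, ζ, hζ, rfl⟩)
    · obtain ⟨a, haS, rfl⟩ := mem_map.1 ha
      exact ⟨coordH n a, coordH_mem_interArrOn haS, hcoord a⟩
    · refine ⟨diffH n (σ.symm a) (σ.symm b) ζ,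
        diffH_mem_interArrOn (σ.symm.injective.ne hab) hζ, ?_⟩
      simp [hdiff]

end InterArrOn

lemma restrict_eq_image_map {V W : Type*} [AddCommGroup V] [Module ℂ V] [AddCommGroup W]
    [Module ℂ W] (A : Set (Submodule ℂ V)) {H : Submodule ℂ V} {φ : W →ₗ[ℂ] V}
    (hφ : LinearMap.range φ = H) :
    Restrict A H = map φ '' (comap φ '' A \ {⊤}) := by
  have hle (H' : Submodule ℂ V) : H ≤ H' ↔ comap φ H' = ⊤ := by
    rw [← hφ, LinearMap.range_le_iff_comap]
  ext X
  constructor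
  · rintro ⟨H', hH', hHH', rfl⟩
    exact ⟨comap φ H', ⟨⟨H', hH', rfl⟩, by rwa [hle] at hHH'⟩, by rw [map_comap_eq, hφ]⟩
  · rintro ⟨_, ⟨⟨H', hH', rfl⟩, hne⟩, rfl⟩
    exact ⟨H', hH', by rwa [hle], by rw [map_comap_eq, hφ]⟩

lemma Finset.exists_perm_map_eq {α : Type*} [Fintype α] [DecidableEq α] {s t : Finset α}
    (h : #s = #t) : ∃ σ : Equiv.Perm α, s.map σ.toEmbedding = t := by
  let e : {x // x ∈ s} ≃ {x // x ∈ t} := Fintype.equivOfCardEq (by simpa using h)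
  refine ⟨e.extendSubtype, ?_⟩
  ext y
  obtain ⟨x, rfl⟩ := e.extendSubtype.surjective y
  simp only [mem_map_equiv, Equiv.symm_apply_apply]
  by_cases hx : x ∈ s
  · simpa [hx] using e.extendSubtype_mem x hx
  · simpa [hx] using e.extendSubtype_not_mem x hx

theorem restrEquiv_of_image_comap {r m n : ℕ} (hr : r ≠ 0) {A : Set (Submodule ℂ (Fin m → ℂ))}
    {H : Submodule ℂ (Fin m → ℂ)} {φ : (Fin n → ℂ) →ₗ[ℂ] (Fin m → ℂ)}
    (hinj : Function.Injective φ) (hφ : LinearMap.range φ = H) {T : Finset (Fin n)}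
    (hT : comap φ '' A \ {⊤} = interArrOn r T) {k : ℕ} (hk : #T = min n k) :
    RestrEquiv r m A H n k := by
  obtain ⟨σ, hσ⟩ := Finset.exists_perm_map_eq (t := {a : Fin n | (a : ℕ) < k})
    (by rw [hk, Fin.card_filter_val_lt])
  set e := LinearEquiv.funCongrLeft ℂ ℂ σ
  have hrange : LinearMap.range (φ ∘ₗ e.toLinearMap) = H := by
    rw [LinearMap.range_comp_of_range_eq_top _ e.range, hφ]
  have hcomap : comap (φ ∘ₗ e.toLinearMap) '' A \ {⊤} = interArr r n k := by
    have he : Function.Injective (comap e.toLinearMap) :=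
      comap_injective_of_surjective e.surjective
    rw [interArr_eq_interArrOn hr, ← hσ, ← image_comap_funCongrLeft_interArrOn, ← hT,
      Set.image_sdiff he, Set.image_image, Set.image_singleton, comap_top]
    simp only [comap_comp]
  exact ⟨φ ∘ₗ e.toLinearMap, hinj.comp e.injective, hrange,
    by rw [restrict_eq_image_map A hrange, hcomap]⟩

noncomputable def insertNthMap {n : ℕ} (i : Fin (n + 1)) (f : (Fin n → ℂ) →ₗ[ℂ] ℂ) :
    (Fin n → ℂ) →ₗ[ℂ] (Fin (n + 1) → ℂ) where
  toFun y := i.insertNth (f y) y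
  map_add' y z := by ext p; induction p using i.succAboveCases <;> simp
  map_smul' c y := by ext p; induction p using i.succAboveCases <;> simp

section InsertNthMap

variable {n r : ℕ} (i : Fin (n + 1)) (f : (Fin n → ℂ) →ₗ[ℂ] ℂ)

@[simp]
lemma insertNthMap_apply_self (y : Fin n → ℂ) : insertNthMap i f y i = f y :=
  Fin.insertNth_apply_same (α := fun _ => ℂ) _ _ _

@[simp]
lemma insertNthMap_apply_succAbove (y : Fin n → ℂ) (a : Fin n) :
    insertNthMap i f y (i.succAbove a) = y a :=
  Fin.insertNth_apply_succAbove (α := fun _ => ℂ) _ _ _ _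

lemma insertNthMap_injective : Function.Injective (insertNthMap i f) := fun y z h =>
  funext fun a => by simpa using congr_fun h (i.succAbove a)

lemma mem_range_insertNthMap {x : Fin (n + 1) → ℂ} :
    x ∈ LinearMap.range (insertNthMap i f) ↔ x i = f (fun a => x (i.succAbove a)) := by
  constructor
  · rintro ⟨y, rfl⟩
    simp
  · intro hx
    refine ⟨fun a => x (i.succAbove a), funext fun p => ?_⟩
    induction p using i.succAboveCases <;> simp [hx]

lemma comap_insertNthMap_coordH_succAbove (a : Fin n) :
    comap (insertNthMap i f) (coordH (n + 1) (i.succAbove a)) = coordH n a := by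
  ext y; simp

lemma comap_insertNthMap_diffH_succAbove (a b : Fin n) (ζ : ℂ) :
    comap (insertNthMap i f) (diffH (n + 1) (i.succAbove a) (i.succAbove b) ζ) = diffH n a b ζ := by
  ext y; simp

lemma image_comap_insertNthMap_zero (hr : r ≠ 0) (S : Finset (Fin (n + 1))) :
    comap (insertNthMap i 0) '' interArrOn r S \ {⊤} = interArrOn r univ := by
  ext K
  constructor
  · rintro ⟨⟨_, ⟨a, -, rfl⟩ | ⟨a, b, hab, η, hη, rfl⟩, rfl⟩, hne⟩
    · induction a using i.succAboveCases with
      | x => exact absurd (by ext y; simp) hne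
      | p a =>
        rw [comap_insertNthMap_coordH_succAbove]
        exact coordH_mem_interArrOn (mem_univ a)
    · have hη0 : η ≠ 0 := (IsUnit.of_pow_eq_one hη hr).ne_zero
      induction a using i.succAboveCases with
      | x =>
        induction b using i.succAboveCases with
        | x => exact absurd rfl hab
        | p b =>
          convert coordH_mem_interArrOn (r := r) (mem_univ b) using 1
          ext y; simp [hη0, eq_comm]
      | p a =>
        induction b using i.succAboveCases with
        | x =>
          convert coordH_mem_interArrOn (r := r) (mem_univ a) using 1
          ext y; simp
        | p b =>
          rw [comap_insertNthMap_diffH_succAbove]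
          exact diffH_mem_interArrOn (ne_of_apply_ne _ hab) hη
  · rintro (⟨a, -, rfl⟩ | ⟨a, b, hab, ζ, hζ, rfl⟩)
    · refine ⟨⟨diffH (n + 1) (i.succAbove a) i 1,
        diffH_mem_interArrOn (i.succAbove_ne a) (one_pow r), ?_⟩, coordH_ne_top a⟩
      ext y; simp
    · exact ⟨⟨_, diffH_mem_interArrOn (i.succAbove_right_injective.ne hab) hζ,
        comap_insertNthMap_diffH_succAbove i 0 a b ζ⟩, diffH_ne_top hab ζ⟩

end InsertNthMap

section SmulProj

variable {n r : ℕ} (i : Fin (n + 1)) (j : Fin n) {ζ : ℂ}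

lemma comap_insertNthMap_smul_proj_coordH_self (hζ : ζ ≠ 0) :
    comap (insertNthMap i (ζ • LinearMap.proj j)) (coordH (n + 1) i) = coordH n j := by
  ext y; simp [hζ]

lemma comap_insertNthMap_smul_proj_diffH_self_left (hζ : ζ ≠ 0) (b : Fin n) (η : ℂ) :
    comap (insertNthMap i (ζ • LinearMap.proj j)) (diffH (n + 1) i (i.succAbove b) η) =
      diffH n j b (η / ζ) := by
  ext y
  simp only [mem_comap, mem_diffH, insertNthMap_apply_self, insertNthMap_apply_succAbove,
    LinearMap.smul_apply, LinearMap.proj_apply, smul_eq_mul]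
  rw [div_mul_eq_mul_div, eq_div_iff hζ, mul_comm (y j)]

lemma comap_insertNthMap_smul_proj_diffH_self_right (a : Fin n) (η : ℂ) :
    comap (insertNthMap i (ζ • LinearMap.proj j)) (diffH (n + 1) (i.succAbove a) i η) =
      diffH n a j (η * ζ) := by
  ext y; simp [mul_assoc]

lemma image_comap_insertNthMap_smul_proj (hr : 2 ≤ r) (hζ : ζ ^ r = 1) (S : Finset (Fin (n + 1))) :
    comap (insertNthMap i (ζ • LinearMap.proj j)) '' interArrOn r S \ {⊤} =
      interArrOn r ((insert (i.succAbove j) S).preimage i.succAbove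
        i.succAbove_right_injective.injOn) := by
  set T := (insert (i.succAbove j) S).preimage i.succAbove i.succAbove_right_injective.injOn
  have hjT : j ∈ T := by simp [T]
  have hζ0 : ζ ≠ 0 := (IsUnit.of_pow_eq_one hζ (by omega)).ne_zero
  ext K
  constructor
  · rintro ⟨⟨_, ⟨a, ha, rfl⟩ | ⟨a, b, hab, η, hη, rfl⟩, rfl⟩, hne⟩
    · induction a using i.succAboveCases with
      | x =>
        rw [comap_insertNthMap_smul_proj_coordH_self i j hζ0]
        exact coordH_mem_interArrOn hjT
      | p a =>
        rw [comap_insertNthMap_coordH_succAbove]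
        exact coordH_mem_interArrOn (by simp [T, ha])
    · induction a using i.succAboveCases with
      | x =>
        induction b using i.succAboveCases with
        | x => exact absurd rfl hab
        | p b =>
          rw [comap_insertNthMap_smul_proj_diffH_self_left i j hζ0] at hne ⊢
          exact diffH_mem_interArrOn_of_ne_top (fun _ => hjT) (by rw [div_pow, hη, hζ, div_one])
            hne
      | p a =>
        induction b using i.succAboveCases with
        | x =>
          rw [comap_insertNthMap_smul_proj_diffH_self_right] at hne ⊢
          exact diffH_mem_interArrOn_of_ne_top (by rintro rfl; exact hjT)
            (by rw [mul_pow, hη, hζ, one_mul]) hne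
        | p b =>
          rw [comap_insertNthMap_diffH_succAbove]
          exact diffH_mem_interArrOn (ne_of_apply_ne _ hab) hη
  · rintro (⟨a, ha, rfl⟩ | ⟨a, b, hab, ξ, hξ, rfl⟩)
    · refine ⟨?_, coordH_ne_top a⟩
      simp only [T, mem_preimage, mem_insert, i.succAbove_right_inj] at ha
      obtain rfl | ha := ha
      · obtain ⟨ω, hω, hω1⟩ : ∃ ω : ℂ, ω ^ r = 1 ∧ ω ≠ 1 :=
          ⟨_, (Complex.isPrimitiveRoot_exp r (by omega)).pow_eq_one,
            (Complex.isPrimitiveRoot_exp r (by omega)).ne_one (by omega)⟩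
        refine ⟨_, diffH_mem_interArrOn (i.succAbove_ne a).symm (r := r) (ζ := ζ * ω)
          (by rw [mul_pow, hζ, hω, one_mul]), ?_⟩
        rw [comap_insertNthMap_smul_proj_diffH_self_left i a hζ0, mul_div_cancel_left₀ _ hζ0,
          diffH_self_of_ne_one a hω1]
      · exact ⟨_, coordH_mem_interArrOn ha, comap_insertNthMap_coordH_succAbove i _ a⟩
    · exact ⟨⟨_, diffH_mem_interArrOn (i.succAbove_right_injective.ne hab) hξ,
        comap_insertNthMap_diffH_succAbove i _ a b ξ⟩, diffH_ne_top hab ξ⟩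

end SmulProj

lemma card_preimage_succAbove {n : ℕ} (i : Fin (n + 1)) (s : Finset (Fin (n + 1))) :
    #(s.preimage i.succAbove i.succAbove_right_injective.injOn) = #(s.erase i) := by
  simp [card_preimage, filter_ne']

section Restrictions

variable {n r : ℕ}

theorem restrEquiv_coordH (hr : r ≠ 0) (i : Fin (n + 1)) (S : Finset (Fin (n + 1))) :
    RestrEquiv r (n + 1) (interArrOn r S) (coordH (n + 1) i) n n := by
  refine restrEquiv_of_image_comap hr (insertNthMap_injective i 0) ?_
    (image_comap_insertNthMap_zero i hr S) (by simp)
  ext x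
  rw [mem_range_insertNthMap]
  simp

theorem restrEquiv_diffH (hr : 2 ≤ r) {i j : Fin (n + 1)} (hij : i ≠ j) {ζ : ℂ}
    (hζ : ζ ^ r = 1) (S : Finset (Fin (n + 1))) {k : ℕ} (hk : #((insert j S).erase i) = min n k) :
    RestrEquiv r (n + 1) (interArrOn r S) (diffH (n + 1) i j ζ) n k := by
  obtain ⟨j, rfl⟩ := Fin.exists_succAbove_eq hij.symm
  refine restrEquiv_of_image_comap (by omega) (insertNthMap_injective i _) ?_
    (image_comap_insertNthMap_smul_proj i j hr hζ S) (by rwa [card_preimage_succAbove])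
  ext x
  rw [mem_range_insertNthMap]
  simp

end Restrictions

theorem stmt_12_general (r ℓ k : ℕ) (hr : 2 ≤ r) :
    (∀ (i j : Fin ℓ) (ζ : ℂ), ζ ^ r = 1 → i < j → (i : ℕ) < k → k ≤ (j : ℕ) →
      RestrEquiv r ℓ (interArr r ℓ k) (diffH ℓ i j ζ) (ℓ - 1) k) ∧
    (∀ i : Fin ℓ, (i : ℕ) < k →
      RestrEquiv r ℓ (interArr r ℓ k) (coordH ℓ i) (ℓ - 1) (ℓ - 1)) ∧
    (∀ (i j : Fin ℓ) (ζ : ℂ), ζ ^ r = 1 → i < j → (j : ℕ) < k →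
      RestrEquiv r ℓ (interArr r ℓ k) (diffH ℓ i j ζ) (ℓ - 1) (k - 1)) ∧
    (∀ (i j : Fin ℓ) (ζ : ℂ), ζ ^ r = 1 → i < j → k ≤ (i : ℕ) →
      RestrEquiv r ℓ (interArr r ℓ k) (diffH ℓ i j ζ) (ℓ - 1) (k + 1)) := by
  obtain _ | n := ℓ
  · exact ⟨fun i => i.elim0, fun i => i.elim0, fun i => i.elim0, fun i => i.elim0⟩
  set S : Finset (Fin (n + 1)) := {a | (a : ℕ) < k}
  have hS : #S = min (n + 1) k := Fin.card_filter_val_lt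
  have hmem (a : Fin (n + 1)) : a ∈ S ↔ (a : ℕ) < k := by simp [S]
  rw [interArr_eq_interArrOn (by omega)]
  refine ⟨fun i j ζ hζ hij hik hkj => restrEquiv_diffH hr hij.ne hζ S ?_,
    fun i _ => restrEquiv_coordH (by omega) i S,
    fun i j ζ hζ hij hjk => restrEquiv_diffH hr hij.ne hζ S ?_,
    fun i j ζ hζ hij hki => restrEquiv_diffH hr hij.ne hζ S ?_⟩
  · rw [card_erase_of_mem (mem_insert_of_mem ((hmem i).2 hik)),
      card_insert_of_notMem (by rw [hmem]; omega)]
    omega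
  · rw [insert_eq_of_mem ((hmem j).2 hjk), card_erase_of_mem ((hmem i).2 (by omega))]
    omega
  · rw [erase_eq_of_notMem (by simp [hij.ne, hmem]; omega),
      card_insert_of_notMem (by rw [hmem]; omega)]
    omega

/-- Restriction types of `A = A^k_ℓ(r)` for `1 ≤ k ≤ ℓ−1`:
`A^{H_{ij}(ζ)} ≅ A^k_{ℓ−1}(r)` for `i ≤ k < j`; `A^{H_i} ≅ A^{ℓ−1}_{ℓ−1}(r)`;
`A^{H_{ij}(ζ)} ≅ A^{k−1}_{ℓ−1}(r)` for `i < j ≤ k`; and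
`A^{H_{ij}(ζ)} ≅ A^{k+1}_{ℓ−1}(r)` for `k < i < j`. -/
theorem stmt_12 (r ℓ k : ℕ) (hr : 2 ≤ r) (hℓ : 2 ≤ ℓ) (hk1 : 1 ≤ k) (hk2 : k ≤ ℓ - 1) :
    (∀ (i j : Fin ℓ) (ζ : ℂ), ζ ^ r = 1 → i < j → (i : ℕ) < k → k ≤ (j : ℕ) →
      RestrEquiv r ℓ (interArr r ℓ k) (diffH ℓ i j ζ) (ℓ - 1) k) ∧
    (∀ i : Fin ℓ, (i : ℕ) < k →
      RestrEquiv r ℓ (interArr r ℓ k) (coordH ℓ i) (ℓ - 1) (ℓ - 1)) ∧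
    (∀ (i j : Fin ℓ) (ζ : ℂ), ζ ^ r = 1 → i < j → (j : ℕ) < k →
      RestrEquiv r ℓ (interArr r ℓ k) (diffH ℓ i j ζ) (ℓ - 1) (k - 1)) ∧
    (∀ (i j : Fin ℓ) (ζ : ℂ), ζ ^ r = 1 → i < j → k ≤ (i : ℕ) →
      RestrEquiv r ℓ (interArr r ℓ k) (diffH ℓ i j ζ) (ℓ - 1) (k + 1)) :=
  stmt_12_general r ℓ k hr
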